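/- Let E be an exponentially distributed random variable with rate λ > 0 and let T > 0. Then E[min(E, T)²] / (2 E[min(E, T)]) = 1/λ - T/(e^{λT} - 1). -/

import Mathlib

/-!
Push the expectations forward to the law of `X`. On the density `λ e^{-λx}` of `(0, ∞)`,
`min x T` equals `x` on `(0, T]` and the constant `T` on the tail, which has mass `e^{-λT}`.
The two truncated moments then come from the antiderivatives `-p(x) e^{-λx}`, where `p` solves
`λ p - p' = x^k`, and give `E[min] = (1 - e^{-λT})/λ` and
`E[min²] = 2(1 - e^{-λT})/λ² - 2T e^{-λT}/λ`.
-/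

open MeasureTheory ProbabilityTheory Real Set

lemma integrableOn_Ioi_mul_exp_neg_mul {r : ℝ} (hr : 0 < r) (c a : ℝ) :
    IntegrableOn (fun x => c * (r * exp (-(r * x)))) (Ioi a) := by
  simp_rw [← neg_mul]
  exact ((exp_neg_integrableOn_Ioi a hr).const_mul r).const_mul c

lemma integral_Ioi_mul_exp_neg_mul {r : ℝ} (hr : 0 < r) (a : ℝ) :
    ∫ x in Ioi a, r * exp (-(r * x)) = exp (-(r * a)) := by
  simp_rw [← neg_mul]
  rw [integral_const_mul, integral_exp_mul_Ioi (by linarith)]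
  field_simp

lemma setIntegral_Ioi_comp_min_mul_exp_neg_mul {r T : ℝ} (hr : 0 < r) (hT : 0 ≤ T) {g : ℝ → ℝ}
    (hg : Continuous g) :
    ∫ x in Ioi 0, g (min x T) * (r * exp (-(r * x)))
      = (∫ x in 0..T, g x * (r * exp (-(r * x)))) + g T * exp (-(r * T)) := by
  have h_tail : EqOn (fun x => g (min x T) * (r * exp (-(r * x))))
      (fun x => g T * (r * exp (-(r * x)))) (Ioi T) := fun x hx => by
    simp only [min_eq_right (mem_Ioi.1 hx).le]
  have h_body : EqOn (fun x => g (min x T) * (r * exp (-(r * x))))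
      (fun x => g x * (r * exp (-(r * x)))) (uIcc 0 T) := fun x hx => by
    rw [uIcc_of_le hT] at hx
    simp only [min_eq_left hx.2]
  rw [← intervalIntegral.integral_interval_add_Ioi'
      ((by fun_prop : Continuous _).intervalIntegrable 0 T)
      ((integrableOn_Ioi_mul_exp_neg_mul hr _ T).congr_fun h_tail.symm measurableSet_Ioi),
    intervalIntegral.integral_congr h_body, setIntegral_congr_fun measurableSet_Ioi h_tail,
    integral_const_mul, integral_Ioi_mul_exp_neg_mul hr]

lemma hasDerivAt_neg_mul_exp_neg_mul {p : ℝ → ℝ} {p' r x : ℝ} (hp : HasDerivAt p p' x) :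
    HasDerivAt (fun y => -p y * exp (-(r * y))) ((r * p x - p') * exp (-(r * x))) x := by
  refine (hp.fun_neg.mul ((hasDerivAt_id' x).const_mul r).fun_neg.exp).congr_deriv ?_
  ring

lemma integral_mul_exp_neg_mul {r : ℝ} (hr : r ≠ 0) (T : ℝ) :
    ∫ x in 0..T, x * (r * exp (-(r * x))) = 1 / r - (T + 1 / r) * exp (-(r * T)) := by
  have hF (x : ℝ) : HasDerivAt (fun y => -(y + 1 / r) * exp (-(r * y)))
      (x * (r * exp (-(r * x)))) x := by
    refine (hasDerivAt_neg_mul_exp_neg_mul ((hasDerivAt_id' x).add_const (1 / r))).congr_deriv ?_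
    field_simp
    ring
  rw [intervalIntegral.integral_eq_sub_of_hasDerivAt (fun x _ => hF x)
    ((by fun_prop : Continuous _).intervalIntegrable 0 T)]
  simp only [mul_zero, neg_zero, exp_zero]
  ring

lemma integral_sq_mul_exp_neg_mul {r : ℝ} (hr : r ≠ 0) (T : ℝ) :
    ∫ x in 0..T, x ^ 2 * (r * exp (-(r * x)))
      = 2 / r ^ 2 - (T ^ 2 + 2 * T / r + 2 / r ^ 2) * exp (-(r * T)) := by
  have hF (x : ℝ) : HasDerivAt (fun y => -(y ^ 2 + 2 * y / r + 2 / r ^ 2) * exp (-(r * y)))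
      (x ^ 2 * (r * exp (-(r * x)))) x := by
    have hp : HasDerivAt (fun y => y ^ 2 + 2 * y / r + 2 / r ^ 2) (2 * x + 2 / r) x := by
      refine (((hasDerivAt_pow 2 x).add (((hasDerivAt_id' x).const_mul 2).div_const r)).add_const
        (2 / r ^ 2)).congr_deriv ?_
      ring
    refine (hasDerivAt_neg_mul_exp_neg_mul hp).congr_deriv ?_
    field_simp
    ring
  rw [intervalIntegral.integral_eq_sub_of_hasDerivAt (fun x _ => hF x)
    ((by fun_prop : Continuous _).intervalIntegrable 0 T)]
  simp only [mul_zero, neg_zero, exp_zero]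
  ring

lemma ProbabilityTheory.integral_withDensity_exponentialPDF {r : ℝ} (hr : 0 < r) (g : ℝ → ℝ) :
    ∫ x, g x ∂volume.withDensity (exponentialPDF r) = ∫ x in Ioi 0, g x * (r * exp (-(r * x))) := by
  rw [integral_withDensity_eq_integral_toReal_smul (by unfold exponentialPDF; fun_prop)
    (by simp [exponentialPDF]), ← integral_Ici_eq_integral_Ioi,
    ← integral_indicator measurableSet_Ici]
  congr 1 with x
  by_cases hx : 0 ≤ x
  · simp [exponentialPDF_of_nonneg hx, hx, (by positivity : 0 ≤ r * exp (-(r * x))), mul_comm]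
  · simp [exponentialPDF_of_neg (not_le.1 hx), hx]

theorem stmt_4_general {Ω : Type*} [MeasurableSpace Ω] (μ : Measure Ω)
    (X : Ω → ℝ) (hX : Measurable X) (lam : ℝ) (hlam : 0 < lam)
    (hlaw : Measure.map X μ = volume.withDensity (exponentialPDF lam))
    (T : ℝ) (hT : 0 < T) :
    (∫ ω, (min (X ω) T) ^ 2 ∂μ) / (2 * ∫ ω, min (X ω) T ∂μ)
      = 1 / lam - T / (Real.exp (lam * T) - 1) := by
  have moment (k : ℕ) : ∫ ω, min (X ω) T ^ k ∂μ
      = (∫ x in 0..T, x ^ k * (lam * exp (-(lam * x)))) + T ^ k * exp (-(lam * T)) := by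
    rw [← integral_map hX.aemeasurable
        (by fun_prop : Continuous fun x => min x T ^ k).aestronglyMeasurable, hlaw,
      integral_withDensity_exponentialPDF hlam]
    exact setIntegral_Ioi_comp_min_mul_exp_neg_mul hlam hT.le (continuous_pow k)
  have mean : ∫ ω, min (X ω) T ∂μ = (1 - exp (-(lam * T))) / lam := by
    have h := moment 1
    simp only [pow_one, integral_mul_exp_neg_mul hlam.ne'] at h
    rw [h]
    field_simp
    ring
  have second_moment : ∫ ω, min (X ω) T ^ 2 ∂μ
      = 2 * (1 - exp (-(lam * T))) / lam ^ 2 - 2 * T * exp (-(lam * T)) / lam := by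
    rw [moment 2, integral_sq_mul_exp_neg_mul hlam.ne']
    field_simp
    ring
  have : exp (lam * T) - 1 ≠ 0 := (sub_pos.2 (one_lt_exp_iff.2 (by positivity))).ne'
  rw [mean, second_moment, exp_neg]
  field_simp

/-- For `E ~ Exp(λ)` and `T > 0`, the mean residual time of `min(E, T)` is
`E[min(E,T)²]/(2 E[min(E,T)]) = 1/λ - T/(e^{λT} - 1)`. -/
theorem stmt_4 {Ω : Type*} [MeasurableSpace Ω] (μ : Measure Ω) [IsProbabilityMeasure μ]
    (X : Ω → ℝ) (hX : Measurable X) (lam : ℝ) (hlam : 0 < lam)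
    (hlaw : Measure.map X μ = volume.withDensity (exponentialPDF lam))
    (T : ℝ) (hT : 0 < T) :
    (∫ ω, (min (X ω) T) ^ 2 ∂μ) / (2 * ∫ ω, min (X ω) T ∂μ)
      = 1 / lam - T / (Real.exp (lam * T) - 1) :=
  stmt_4_general μ X hX lam hlam hlaw T hT
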